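/- arXiv:1407.0548 — 3 statements merged into one kernel-verified Lean document; each statement's English description precedes it below -/
import Mathlib

section
/- Let G be a finite abelian group with |G| ≥ 3, and let U be a minimal zero-sum sequence over G of length D(G) with |supp(U)| ≥ 2. Let g ∈ G with v_g(U) = k ≥ 1 and ord(g) > 2. Then there exists a minimal zero-sum sequence W dividing (-g)^k · g^{-k} U (the sequence obtained from U by replacing all k copies of g by k copies of -g) with 3 ≤ |W| ≤ D(G) - 1. -/
open Multiset

/-- A minimal zero-sum sequence over `G`: a nonempty zero-sum sequence with no
proper nonempty zero-sum subsequence. -/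
def IsMinZeroSum {G : Type*} [AddCommGroup G] (S : Multiset G) : Prop :=
  S ≠ 0 ∧ S.sum = 0 ∧ ∀ T : Multiset G, T ≤ S → T ≠ 0 → T ≠ S → T.sum ≠ 0

/-- The Davenport constant of `G`: the maximal length of a minimal zero-sum
sequence over `G`. -/
noncomputable def DavenportConstant (G : Type*) [AddCommGroup G] : ℕ :=
  sSup {n : ℕ | ∃ S : Multiset G, IsMinZeroSum S ∧ Multiset.card S = n}

/-- The set of lengths of a zero-sum sequence `A`: the set of all `k` such that
`A` can be written as a product of `k` minimal zero-sum sequences. -/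
def LengthsSet {G : Type*} [AddCommGroup G] (A : Multiset G) : Set ℕ :=
  {k : ℕ | ∃ f : Multiset (Multiset G), Multiset.card f = k ∧
    (∀ S ∈ f, IsMinZeroSum S) ∧ f.sum = A}

/-- A factorization of a zero-sum sequence `A` into minimal zero-sum sequences. -/
def IsFactorization {G : Type*} [AddCommGroup G] (A : Multiset G)
    (z : Multiset (Multiset G)) : Prop :=
  (∀ S ∈ z, IsMinZeroSum S) ∧ z.sum = A

/-- The distance between two factorizations. -/
def factDist {G : Type*} [AddCommGroup G] [DecidableEq G]
    (z z' : Multiset (Multiset G)) : ℕ :=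
  max (Multiset.card (z - z')) (Multiset.card (z' - z))

/-- The catenary degree of the monoid of zero-sum sequences over `G`: the smallest
`N` such that any two factorizations of an element can be connected by a chain of
factorizations in which consecutive members have distance at most `N`. -/
noncomputable def CatenaryDegree (G : Type*) [AddCommGroup G] [DecidableEq G] : ℕ :=
  sInf {N : ℕ | ∀ (A : Multiset G) (z z' : Multiset (Multiset G)),
    IsFactorization A z → IsFactorization A z' →
    Relation.ReflTransGen (fun x y => IsFactorization A y ∧ factDist x y ≤ N) z z'}

/-- The invariant `ℸ(G) = sup { min (L \ {2}) : 2 ∈ L ∈ 𝓛(G) }`. -/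
noncomputable def Daleth (G : Type*) [AddCommGroup G] : ℕ :=
  sSup {m : ℕ | ∃ A : Multiset G, A.sum = 0 ∧ 2 ∈ LengthsSet A ∧
    (LengthsSet A \ {2}).Nonempty ∧ m = sInf (LengthsSet A \ {2})}

/-!
Write `U = g^k T` with `g ∉ T`. The sequence `U' = (-g)^k T` has length `D(G)`, so it contains a
minimal zero-sum subsequence `W`. If `|W| ≤ 2`, then `W` would divide the proper subsequence `T`
of `U`, or be `(-g)^j` with `j ≤ 2 < ord g`, or be `(-g) g` with `g ∉ T`; so `|W| ≥ 3`.
It remains to see `W ≠ U'`, i.e. that `U'` is not minimal. If it were, comparing `σ(U)` with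
`σ(U')` gives `ord g = 2k`. Removing one term `h` from `T` leaves a zero-sum free sequence
`g^k T₀` of length `D(G) - 1`, all of whose extensions by one term contain a zero sum; hence
`(k + 1) g` is a subsum `g^a T'` with `T' ≤ T₀`. Then `σ(T') = (k + 1 - a) g`, so
`(-g)^(k + 1 - a) T'` (if `a ≥ 1`) or `g^(k - 1) T'` (if `a = 0`) is a proper nonempty zero-sum
subsequence of `U'` or of `U`.
-/

theorem Multiset.exists_replicate_add_eq_of_le_replicate_add {α : Type*} {V T : Multiset α}
    {x : α} {k : ℕ} (h : V ≤ replicate k x + T) :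
    ∃ j ≤ k, ∃ V' ≤ T, V = replicate j x + V' := by
  classical
  obtain ⟨j, hj, hrep⟩ := le_replicate_iff.mp (inter_le_right (s := V) (t := replicate k x))
  refine ⟨j, hj, V - replicate k x, tsub_le_iff_left.mpr h, ?_⟩
  rw [← hrep, add_comm, sub_add_inter]

def IsZeroSumFree {G : Type*} [AddCommGroup G] (S : Multiset G) : Prop :=
  ∀ T ≤ S, T ≠ 0 → T.sum ≠ 0

section ZeroSumSequences
variable {G : Type*} [AddCommGroup G] {S T U W : Multiset G}

theorem IsMinZeroSum.eq_of_le (hU : IsMinZeroSum U) (hW : W ≤ U) (hW0 : W ≠ 0)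
    (hWs : W.sum = 0) : W = U := by
  by_contra h
  exact hU.2.2 W hW hW0 h hWs

theorem IsMinZeroSum.isZeroSumFree_of_lt (hU : IsMinZeroSum U) (hS : S < U) :
    IsZeroSumFree S := fun _ hT hT0 hTs =>
  hS.not_ge ((hU.eq_of_le (hT.trans hS.le) hT0 hTs).symm.le.trans hT)

theorem exists_isMinZeroSum_le (hS0 : S ≠ 0) (hS : S.sum = 0) : ∃ W ≤ S, IsMinZeroSum W := by
  induction S using Multiset.strongInductionOn with
  | ih S ih =>
    by_cases hmin : IsMinZeroSum S
    · exact ⟨S, le_rfl, hmin⟩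
    · obtain ⟨T, hT, hT0, hTS, hTs⟩ : ∃ T ≤ S, T ≠ 0 ∧ T ≠ S ∧ T.sum = 0 := by
        by_contra! h
        exact hmin ⟨hS0, hS, h⟩
      obtain ⟨W, hW, hWmin⟩ := ih T (lt_of_le_of_ne hT hTS) hT0 hTs
      exact ⟨W, hW.trans hT, hWmin⟩

theorem IsZeroSumFree.isMinZeroSum_cons (hS : IsZeroSumFree S) :
    IsMinZeroSum ((-S.sum) ::ₘ S) := by
  refine ⟨cons_ne_zero, by simp, fun T hT hT0 hTS hTs => ?_⟩
  by_cases hmem : -S.sum ∈ T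
  · obtain ⟨T', rfl⟩ := exists_cons_of_mem hmem
    obtain ⟨R, rfl⟩ := Multiset.le_iff_exists_add.mp ((cons_le_cons_iff _).mp hT)
    refine hS R le_add_self (fun hR => hTS (by rw [hR, add_zero])) ?_
    simp only [sum_cons, sum_add, neg_add_rev] at hTs
    simpa using hTs
  · exact hS T ((le_cons_of_notMem hmem).mp hT) hT0 hTs

theorem IsZeroSumFree.card_lt_card [Fintype G] (hS : IsZeroSumFree S) :
    card S < Fintype.card G := by
  obtain ⟨l, rfl⟩ := Quot.exists_rep S
  by_contra! hle
  obtain ⟨i, j, hij, hsum⟩ := Fintype.exists_ne_map_eq_of_card_lt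
    (fun i : Fin (l.length + 1) => (l.take i).sum) (by simpa [Nat.lt_succ_iff] using hle)
  wlog hlt : i < j generalizing i j
  · exact this j i hij.symm hsum.symm (lt_of_le_of_ne (not_lt.mp hlt) hij.symm)
  have htake : l.take j = l.take i ++ (l.drop i).take (j - i) := by
    rw [← List.take_add]
    congr
    omega
  refine hS ((l.drop i).take (j - i)) ?_ ?_ ?_
  · exact coe_le.mpr ((List.take_sublist _ _).trans (List.drop_sublist _ _)).subperm
  · have : (j : ℕ) ≤ l.length := Nat.lt_succ_iff.mp j.isLt
    simp only [ne_eq, coe_eq_zero, ← List.length_eq_zero_iff, List.length_take, List.length_drop]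
    omega
  · simpa [htake] using hsum.symm

section Finite
variable [Fintype G]

theorem IsMinZeroSum.card_le_card (hU : IsMinZeroSum U) : card U ≤ Fintype.card G := by
  obtain ⟨a, ha⟩ := exists_mem_of_ne_zero hU.1
  obtain ⟨U', rfl⟩ := exists_cons_of_mem ha
  have := (hU.isZeroSumFree_of_lt (lt_cons_self U' a)).card_lt_card
  rw [card_cons]
  omega

theorem bddAbove_card_isMinZeroSum :
    BddAbove {n : ℕ | ∃ S : Multiset G, IsMinZeroSum S ∧ card S = n} :=
  ⟨Fintype.card G, by rintro n ⟨S, hS, rfl⟩; exact hS.card_le_card⟩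

theorem IsMinZeroSum.card_le_davenportConstant (hU : IsMinZeroSum U) :
    card U ≤ DavenportConstant G :=
  le_csSup bddAbove_card_isMinZeroSum ⟨U, hU, rfl⟩

theorem IsZeroSumFree.card_lt_davenportConstant (hS : IsZeroSumFree S) :
    card S < DavenportConstant G := by
  simpa using hS.isMinZeroSum_cons.card_le_davenportConstant

theorem exists_isMinZeroSum_le_of_davenportConstant_le_card (h : DavenportConstant G ≤ card S) :
    ∃ W ≤ S, IsMinZeroSum W := by
  have : ¬ IsZeroSumFree S := fun hS => (hS.card_lt_davenportConstant.trans_le h).false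
  obtain ⟨T, hT, hT0, hTs⟩ : ∃ T ≤ S, T ≠ 0 ∧ T.sum = 0 := by
    simpa [IsZeroSumFree] using this
  obtain ⟨W, hW, hWmin⟩ := exists_isMinZeroSum_le hT0 hTs
  exact ⟨W, hW.trans hT, hWmin⟩

theorem IsZeroSumFree.exists_le_sum_eq (hS : IsZeroSumFree S)
    (hcard : DavenportConstant G ≤ card S + 1) (x : G) : ∃ T ≤ S, T.sum = x := by
  obtain ⟨W, hW, hWmin⟩ :=
    exists_isMinZeroSum_le_of_davenportConstant_le_card (S := (-x) ::ₘ S) (by simpa using hcard)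
  by_cases hx : -x ∈ W
  · obtain ⟨W', rfl⟩ := exists_cons_of_mem hx
    refine ⟨W', (cons_le_cons_iff _).mp hW, ?_⟩
    simpa [neg_add_eq_zero, eq_comm] using hWmin.2.1
  · exact absurd hWmin.2.1 (hS W ((le_cons_of_notMem hx).mp hW) hWmin.1)

end Finite

section Negation
variable {T' : Multiset G} {x g : G} {i k : ℕ}

theorem IsMinZeroSum.nsmul_add_sum_ne_zero (hU : IsMinZeroSum (replicate k x + T)) (hT' : T' ≤ T)
    (hT'0 : T' ≠ 0) (hT'T : T' ≠ T) (hi : i ≤ k) : i • x + T'.sum ≠ 0 := by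
  intro hsum
  have hle : replicate i x + T' ≤ replicate k x + T :=
    add_le_add ((replicate_le_replicate x).mpr hi) hT'
  have heq := hU.eq_of_le hle (by simp [hT'0]) (by simpa using hsum)
  have hlt := card_lt_card (lt_of_le_of_ne hT' hT'T)
  have := congrArg card heq
  simp only [card_add, card_replicate] at this
  omega

theorem IsMinZeroSum.lt_addOrderOf (hU : IsMinZeroSum (replicate k x + T)) (hT : T ≠ 0)
    (hx : 0 < addOrderOf x) : k < addOrderOf x := by
  by_contra! hk
  have hle : replicate (addOrderOf x) x ≤ replicate k x + T :=
    ((replicate_le_replicate x).mpr hk).trans le_self_add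
  have heq := hU.eq_of_le hle (by rw [Ne, ← card_eq_zero, card_replicate]; exact hx.ne')
    (by simp)
  have := congrArg card heq
  simp only [card_add, card_replicate] at this
  have := card_pos.mpr hT
  omega

theorem IsMinZeroSum.two_mul_eq_addOrderOf (hA : IsMinZeroSum (replicate k g + T))
    (hB : IsMinZeroSum (replicate k (-g) + T)) (hT : T ≠ 0) (hk : k ≠ 0)
    (hg : 0 < addOrderOf g) : 2 * k = addOrderOf g := by
  have h2k : (2 * k) • g = 0 := by
    have hA0 := hA.2.1
    have hB0 := hB.2.1
    simp only [sum_add, sum_replicate, smul_neg] at hA0 hB0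
    calc (2 * k) • g = (k • g + T.sum) - (-(k • g) + T.sum) := by
          rw [two_mul, add_nsmul]; abel
      _ = 0 := by rw [hA0, hB0, sub_zero]
  exact Nat.eq_of_dvd_of_lt_two_mul (by omega) (addOrderOf_dvd_of_nsmul_eq_zero h2k)
    (by have := hA.lt_addOrderOf hT hg; omega)

theorem IsMinZeroSum.three_le_card_of_le_replicate_neg_add
    (hA : IsMinZeroSum (replicate k g + T)) (hgT : g ∉ T) (hk : k ≠ 0) (hg : 2 < addOrderOf g)
    (hW : IsMinZeroSum W) (hWle : W ≤ replicate k (-g) + T) : 3 ≤ card W := by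
  obtain ⟨j, -, W', hW', rfl⟩ := exists_replicate_add_eq_of_le_replicate_add hWle
  have hsum : j • (-g) + W'.sum = 0 := by simpa using hW.2.1
  by_contra! hlt
  simp only [card_add, card_replicate] at hlt
  rcases Nat.eq_zero_or_pos j with rfl | hj
  · have hTA : T < replicate k g + T := lt_add_of_pos_left T <| by
      rw [pos_iff_ne_zero, Ne, ← card_eq_zero, card_replicate]; exact hk
    exact hA.isZeroSumFree_of_lt hTA W' hW' (by simpa using hW.1) (by simpa using hsum)
  · rcases Nat.lt_or_ge (card W') 1 with h0 | h1
    · rw [card_eq_zero.mp (show card W' = 0 by omega), sum_zero, add_zero, smul_neg,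
        neg_eq_zero] at hsum
      exact nsmul_ne_zero_of_lt_addOrderOf hj.ne' (by omega) hsum
    · obtain ⟨h, rfl⟩ := card_eq_one.mp (show card W' = 1 by omega)
      obtain rfl : j = 1 := by rw [card_singleton] at hlt; omega
      rw [sum_singleton, one_nsmul, neg_add_eq_zero] at hsum
      rw [← hsum] at hW'
      exact hgT (singleton_le.mp hW')

theorem IsMinZeroSum.not_isMinZeroSum_replicate_neg_add [Fintype G]
    (hA : IsMinZeroSum (replicate k g + T))
    (hcard : card (replicate k g + T) = DavenportConstant G) (hT : T ≠ 0) (hk : k ≠ 0)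
    (hg : 2 < addOrderOf g) : ¬ IsMinZeroSum (replicate k (-g) + T) := by
  intro hB
  have hm := hA.two_mul_eq_addOrderOf hB hT hk (by omega)
  obtain ⟨h, hh⟩ := exists_mem_of_ne_zero hT
  obtain ⟨T₀, rfl⟩ := exists_cons_of_mem hh
  have hfree : IsZeroSumFree (replicate k g + T₀) :=
    hA.isZeroSumFree_of_lt (add_lt_add_right (lt_cons_self T₀ h) _)
  obtain ⟨V, hV, hVs⟩ :=
    hfree.exists_le_sum_eq (by simp only [card_add, card_cons] at hcard ⊢; omega) ((k + 1) • g)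
  obtain ⟨a, ha, T', hT', rfl⟩ := exists_replicate_add_eq_of_le_replicate_add hV
  have hT's : T'.sum = (k + 1 - a) • g := by
    rw [sum_add, sum_replicate, ← Nat.add_sub_cancel' (show a ≤ k + 1 by omega),
      add_nsmul] at hVs
    exact add_left_cancel hVs
  have hT'0 : T' ≠ 0 := by
    rintro rfl
    exact nsmul_ne_zero_of_lt_addOrderOf (by omega) (by omega) (hT's.symm.trans sum_zero)
  have hT'T : T' ≠ h ::ₘ T₀ := (lt_of_le_of_lt hT' (lt_cons_self _ _)).ne
  have hT'le : T' ≤ h ::ₘ T₀ := hT'.trans (le_cons_self _ _)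
  rcases Nat.eq_zero_or_pos a with rfl | ha0
  · apply hA.nsmul_add_sum_ne_zero hT'le hT'0 hT'T (i := k - 1) (by omega)
    rw [hT's, ← add_nsmul, show k - 1 + (k + 1 - 0) = addOrderOf g by omega,
      addOrderOf_nsmul_eq_zero]
  · apply hB.nsmul_add_sum_ne_zero hT'le hT'0 hT'T (i := k + 1 - a) (by omega)
    rw [hT's, smul_neg, neg_add_cancel]

end Negation
end ZeroSumSequences

theorem statement2_general {G : Type*} [AddCommGroup G] [Fintype G] [DecidableEq G]
    (U : Multiset G) (hU : IsMinZeroSum U)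
    (hcard : Multiset.card U = DavenportConstant G)
    (hsupp : 2 ≤ U.toFinset.card)
    (g : G) (k : ℕ) (hk : U.count g = k) (hk1 : 1 ≤ k)
    (hord : 2 < addOrderOf g) :
    ∃ W : Multiset G, IsMinZeroSum W ∧
      W ≤ (U - Multiset.replicate k g) + Multiset.replicate k (-g) ∧
      3 ≤ Multiset.card W ∧ Multiset.card W ≤ DavenportConstant G - 1 := by
  obtain ⟨T, rfl⟩ : ∃ T, U = replicate k g + T :=
    ⟨U - replicate k g, (add_tsub_cancel_of_le (le_count_iff_replicate_le.mp hk.ge)).symm⟩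
  have hgT : g ∉ T := by
    rw [← count_eq_zero]
    simpa using hk
  have hT : T ≠ 0 := by
    rintro rfl
    simp [toFinset_replicate, Nat.one_le_iff_ne_zero.mp hk1] at hsupp
  rw [add_tsub_cancel_left, add_comm]
  obtain ⟨W, hWle, hW⟩ := exists_isMinZeroSum_le_of_davenportConstant_le_card
    (S := replicate k (-g) + T) (by simpa using hcard.ge)
  have hWne : W ≠ replicate k (-g) + T := by
    rintro rfl
    exact hU.not_isMinZeroSum_replicate_neg_add hcard hT (by omega) hord hW
  have hWlt := card_lt_card (lt_of_le_of_ne hWle hWne)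
  refine ⟨W, hW, hWle, hU.three_le_card_of_le_replicate_neg_add hgT (by omega) hord hW hWle, ?_⟩
  simp only [card_add, card_replicate] at hWlt hcard
  omega

theorem statement2 {G : Type*} [AddCommGroup G] [Fintype G] [DecidableEq G]
    (hG : 3 ≤ Fintype.card G) (U : Multiset G) (hU : IsMinZeroSum U)
    (hcard : Multiset.card U = DavenportConstant G)
    (hsupp : 2 ≤ U.toFinset.card)
    (g : G) (k : ℕ) (hk : U.count g = k) (hk1 : 1 ≤ k)
    (hord : 2 < addOrderOf g) :
    ∃ W : Multiset G, IsMinZeroSum W ∧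
      W ≤ (U - Multiset.replicate k g) + Multiset.replicate k (-g) ∧
      3 ≤ Multiset.card W ∧ Multiset.card W ≤ DavenportConstant G - 1 :=
  statement2_general U hU hcard hsupp g k hk hk1 hord
end

section
/- Let G be a finite abelian group of the form C₂ ⊕ C_{2n} with n ≥ 2, with basis (e₁, e₂) where ord(e₁) = 2 and ord(e₂) = 2n. Then U = e₁ · e₂^{2n-1} · (e₁ + e₂) is a minimal zero-sum sequence over G and L(U · (-U)) = {2, 2n, 2n+1}. -/
open Multiset

/-!
Write `e = (1, 0)` and `g = (0, 1)`, so that `U = g^(2n-1) e (e+g)` and `-U = (-g)^(2n-1) e (e-g)`.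
Every subsequence of `U · (-U)` is `g^p (-g)^q e^r (e+g)^s (e-g)^t` with `p + s, q + t ≤ 2n`, and it
has sum zero iff `r + s + t` is even and `p + s ≡ q + t (mod 2n)`. This leaves exactly seven minimal
zero-sum subsequences: `g(-g)`, `e²`, `(e+g)(e-g)`, `(-g) e (e+g)`, `g e (e-g)`, `U` and `-U`.
A factorization is thus a vector of seven multiplicities solving five linear equations, and the
solutions are `U · (-U)`, `(-g) e (e+g) · g e (e-g) · (g(-g))^(2n-2)` and
`e² · (e+g)(e-g) · (g(-g))^(2n-1)`, of lengths `2`, `2n` and `2n + 1`.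
-/

theorem Nat.mod_eq_mod_iff_of_le {a b m : ℕ} (ha : a ≤ m) (hb : b ≤ m) :
    a % m = b % m ↔ a = b ∨ a + m = b ∨ b + m = a := by
  rcases ha.lt_or_eq with ha | rfl <;> rcases hb.lt_or_eq with hb | rfl <;>
    simp [Nat.mod_eq_of_lt, *] <;> omega

theorem Multiset.exists_eq_add_of_le_add {α : Type*} {T s t : Multiset α} (h : T ≤ s + t) :
    ∃ u ≤ s, ∃ v ≤ t, T = u + v := by
  classical
  exact ⟨T ∩ s, inter_le_right .., T - s, Multiset.sub_le_iff_le_add'.2 h,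
    by rw [add_comm, sub_add_inter]⟩

theorem Multiset.exists_eq_sum_nsmul_singleton {ι α : Type*} [Fintype ι] (a : ι → α)
    {f : Multiset α} (hf : ∀ x ∈ f, ∃ i, x = a i) : ∃ c : ι → ℕ, f = ∑ i, c i • {a i} := by
  classical
  induction f using Multiset.induction with
  | empty => exact ⟨0, by simp⟩
  | cons x f ih =>
    obtain ⟨c, rfl⟩ := ih fun y hy => hf y (mem_cons_of_mem hy)
    obtain ⟨i, rfl⟩ := hf _ (mem_cons_self _ _)
    refine ⟨c + Pi.single i 1, ?_⟩
    simp [add_nsmul, Finset.sum_add_distrib, Pi.single_apply, ← singleton_add, add_comm]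

theorem IsMinZeroSum.eq_of_le_s12 {G : Type*} [AddCommGroup G] {S T : Multiset G}
    (hS : IsMinZeroSum S) (hT : T ≤ S) (hT0 : T ≠ 0) (hTsum : T.sum = 0) : T = S :=
  by_contra fun hne => hS.2.2 T hT hT0 hne hTsum

theorem mem_lengthsSet_iff_exists_nsmul {G ι : Type*} [AddCommGroup G] [Fintype ι]
    {A : Multiset G} (a : ι → Multiset G) (ha : ∀ i, IsMinZeroSum (a i))
    (hA : ∀ S ≤ A, IsMinZeroSum S → ∃ i, S = a i) {k : ℕ} :
    k ∈ LengthsSet A ↔ ∃ c : ι → ℕ, ∑ i, c i = k ∧ ∑ i, c i • a i = A := by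
  constructor
  · rintro ⟨f, rfl, hmin, rfl⟩
    obtain ⟨c, rfl⟩ := exists_eq_sum_nsmul_singleton a fun S hS =>
      hA S (le_sum_of_mem hS) (hmin S hS)
    exact ⟨c, by simp, by simp [sum_sum, sum_nsmul]⟩
  · rintro ⟨c, rfl, rfl⟩
    refine ⟨∑ i, c i • {a i}, by simp, fun S hS => ?_, by simp [sum_sum, sum_nsmul]⟩
    obtain ⟨i, -, hi⟩ := Multiset.mem_sum.1 hS
    rw [(by simpa using hi : c i ≠ 0 ∧ S = a i).2]
    exact ha i

namespace C2C2n

def seq (n p q r s t : ℕ) : Multiset (ZMod 2 × ZMod (2 * n)) :=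
  replicate p (0, 1) + replicate q (0, -1) + replicate r (1, 0) + replicate s (1, 1) +
    replicate t (1, -1)

variable {n p q r s t p' q' r' s' t' : ℕ}

theorem seq_add : seq n p q r s t + seq n p' q' r' s' t' =
    seq n (p + p') (q + q') (r + r') (s + s') (t + t') := by
  simp only [seq, replicate_add]
  abel

theorem nsmul_seq (k : ℕ) :
    k • seq n p q r s t = seq n (k * p) (k * q) (k * r) (k * s) (k * t) := by
  simp only [seq, nsmul_add, nsmul_replicate]

theorem seq_eq_zero_iff : seq n p q r s t = 0 ↔ p + q + r + s + t = 0 := by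
  rw [← card_eq_zero]
  simp [seq]

theorem seq_le_seq (hp : p' ≤ p) (hq : q' ≤ q) (hr : r' ≤ r) (hs : s' ≤ s) (ht : t' ≤ t) :
    seq n p' q' r' s' t' ≤ seq n p q r s t := by
  unfold seq
  gcongr

theorem exists_eq_seq_of_le {T : Multiset (ZMod 2 × ZMod (2 * n))} (hT : T ≤ seq n p q r s t) :
    ∃ p' ≤ p, ∃ q' ≤ q, ∃ r' ≤ r, ∃ s' ≤ s, ∃ t' ≤ t, T = seq n p' q' r' s' t' := by
  obtain ⟨T₁₂₃₄, hT₁₂₃₄, T₅, hT₅, rfl⟩ := exists_eq_add_of_le_add hT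
  obtain ⟨T₁₂₃, hT₁₂₃, T₄, hT₄, rfl⟩ := exists_eq_add_of_le_add hT₁₂₃₄
  obtain ⟨T₁₂, hT₁₂, T₃, hT₃, rfl⟩ := exists_eq_add_of_le_add hT₁₂₃
  obtain ⟨T₁, hT₁, T₂, hT₂, rfl⟩ := exists_eq_add_of_le_add hT₁₂
  obtain ⟨p', hp, rfl⟩ := le_replicate_iff.1 hT₁
  obtain ⟨q', hq, rfl⟩ := le_replicate_iff.1 hT₂
  obtain ⟨r', hr, rfl⟩ := le_replicate_iff.1 hT₃
  obtain ⟨s', hs, rfl⟩ := le_replicate_iff.1 hT₄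
  obtain ⟨t', ht, rfl⟩ := le_replicate_iff.1 hT₅
  exact ⟨p', hp, q', hq, r', hr, s', hs, t', ht, rfl⟩

theorem map_neg_seq : (seq n p q r s t).map (- ·) = seq n q p r t s := by
  have h : (-1 : ZMod 2) = 1 := rfl
  simp only [seq, map_add, map_replicate, Prod.neg_mk, neg_zero, neg_neg, h]
  abel

theorem sum_seq : (seq n p q r s t).sum =
    (((r + s + t : ℕ) : ZMod 2), ((p + s : ℕ) : ZMod (2 * n)) - ((q + t : ℕ) : ZMod (2 * n))) := by
  simp [seq, Prod.ext_iff]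
  ring

/-- The zero-sum condition on the counts of `seq n p q r s t`, with `p + s ≡ q + t (mod 2n)`
spelled out for `p + s, q + t ≤ 2n`. -/
def ZeroSumCounts (n p q r s t : ℕ) : Prop :=
  2 ∣ r + s + t ∧ (p + s = q + t ∨ p + s + 2 * n = q + t ∨ q + t + 2 * n = p + s)

theorem sum_seq_eq_zero_iff (hps : p + s ≤ 2 * n) (hqt : q + t ≤ 2 * n) :
    (seq n p q r s t).sum = 0 ↔ ZeroSumCounts n p q r s t := by
  rw [sum_seq, Prod.mk_eq_zero, sub_eq_zero, ZMod.natCast_eq_zero_iff,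
    ZMod.natCast_eq_natCast_iff', Nat.mod_eq_mod_iff_of_le hps hqt, ZeroSumCounts]

theorem count_seq (hn : 2 ≤ n) :
    count (0, 1) (seq n p q r s t) = p ∧ count (0, -1) (seq n p q r s t) = q ∧
      count (1, 0) (seq n p q r s t) = r ∧ count (1, 1) (seq n p q r s t) = s ∧
      count (1, -1) (seq n p q r s t) = t := by
  have : Fact (1 < 2 * n) := ⟨by omega⟩
  have : Fact (2 < 2 * n) := ⟨by omega⟩
  have h₁ : (1 : ZMod (2 * n)) ≠ 0 := one_ne_zero
  have h₂ : (-1 : ZMod (2 * n)) ≠ 0 := neg_ne_zero.2 h₁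
  have h₃ : (-1 : ZMod (2 * n)) ≠ 1 := ZMod.neg_one_ne_one
  have h₀ : (0 : ZMod 2) ≠ 1 := by decide
  simp [seq, count_replicate, h₀, h₀.symm, h₁, h₁.symm, h₂, h₂.symm, h₃, h₃.symm]

theorem seq_inj (hn : 2 ≤ n) : seq n p q r s t = seq n p' q' r' s' t' ↔
    p = p' ∧ q = q' ∧ r = r' ∧ s = s' ∧ t = t' := by
  refine ⟨fun h => ?_, by rintro ⟨rfl, rfl, rfl, rfl, rfl⟩; rfl⟩
  obtain ⟨hp, hq, hr, hs, ht⟩ := count_seq (p := p) (q := q) (r := r) (s := s) (t := t) hn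
  obtain ⟨hp', hq', hr', hs', ht'⟩ :=
    count_seq (p := p') (q := q') (r := r') (s := s') (t := t') hn
  rw [h] at hp hq hr hs ht
  omega

theorem isMinZeroSum_seq (hps : p + s ≤ 2 * n) (hqt : q + t ≤ 2 * n)
    (h0 : 0 < p + q + r + s + t) (hz : ZeroSumCounts n p q r s t)
    (hmin : ∀ p' ≤ p, ∀ q' ≤ q, ∀ r' ≤ r, ∀ s' ≤ s, ∀ t' ≤ t, ZeroSumCounts n p' q' r' s' t' →
      p' + q' + r' + s' + t' = 0 ∨ (p' = p ∧ q' = q ∧ r' = r ∧ s' = s ∧ t' = t)) :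
    IsMinZeroSum (seq n p q r s t) := by
  refine ⟨by rw [Ne, seq_eq_zero_iff]; omega, (sum_seq_eq_zero_iff hps hqt).2 hz,
    fun T hT hT0 hTS hsum => ?_⟩
  obtain ⟨p', hp, q', hq, r', hr, s', hs, t', ht, rfl⟩ := exists_eq_seq_of_le hT
  rw [sum_seq_eq_zero_iff (by omega) (by omega)] at hsum
  rcases hmin p' hp q' hq r' hr s' hs t' ht hsum with h | ⟨rfl, rfl, rfl, rfl, rfl⟩
  · exact hT0 (seq_eq_zero_iff.2 h)
  · exact hTS rfl

def atom (n : ℕ) : Fin 7 → Multiset (ZMod 2 × ZMod (2 * n)) :=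
  ![seq n 1 1 0 0 0, seq n 0 0 2 0 0, seq n 0 0 0 1 1, seq n 0 1 1 1 0, seq n 1 0 1 0 1,
    seq n (2 * n - 1) 0 1 1 0, seq n 0 (2 * n - 1) 1 0 1]

theorem isMinZeroSum_atom (hn : 1 ≤ n) (i : Fin 7) : IsMinZeroSum (atom n i) := by
  fin_cases i <;> dsimp [atom] <;>
    exact isMinZeroSum_seq (by omega) (by omega) (by omega) (by unfold ZeroSumCounts; omega)
      (by unfold ZeroSumCounts; intros; omega)

theorem exists_eq_atom (hn : 2 ≤ n) {S : Multiset (ZMod 2 × ZMod (2 * n))}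
    (hS : S ≤ seq n (2 * n - 1) (2 * n - 1) 2 1 1) (hmin : IsMinZeroSum S) :
    ∃ i, S = atom n i := by
  obtain ⟨p, hp, q, hq, r, hr, s, hs, t, ht, rfl⟩ := exists_eq_seq_of_le hS
  have hz := (sum_seq_eq_zero_iff (by omega) (by omega)).1 hmin.2.1
  have h0 : p + q + r + s + t ≠ 0 := mt seq_eq_zero_iff.2 hmin.1
  have hsubseq : ∀ {p' q' r' s' t'}, p' ≤ p → q' ≤ q → r' ≤ r → s' ≤ s → t' ≤ t →
      ZeroSumCounts n p' q' r' s' t' → 0 < p' + q' + r' + s' + t' →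
      p' = p ∧ q' = q ∧ r' = r ∧ s' = s ∧ t' = t := fun hp hq hr hs ht hz' h0' =>
    (seq_inj hn).1 (hmin.eq_of_le_s12 (seq_le_seq hp hq hr hs ht)
      (by rw [Ne, seq_eq_zero_iff]; omega) ((sum_seq_eq_zero_iff (by omega) (by omega)).2 hz'))
  -- `S` contains none of `g(-g)`, `e²`, `(e+g)(e-g)` unless it is that sequence
  have hP := @hsubseq 1 1 0 0 0
  have hE := @hsubseq 0 0 2 0 0
  have hAB := @hsubseq 0 0 0 1 1
  unfold ZeroSumCounts at hz hP hE hAB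
  rcases (by omega : (r = 0 ∧ s = 0 ∧ t = 0) ∨ (r = 2 ∧ s = 0 ∧ t = 0) ∨
      (r = 0 ∧ s = 1 ∧ t = 1) ∨ (r = 1 ∧ s = 1 ∧ t = 0) ∨ (r = 1 ∧ s = 0 ∧ t = 1)) with
    ⟨rfl, rfl, rfl⟩ | ⟨rfl, rfl, rfl⟩ | ⟨rfl, rfl, rfl⟩ | ⟨rfl, rfl, rfl⟩ | ⟨rfl, rfl, rfl⟩
  · obtain ⟨rfl, rfl⟩ : p = 1 ∧ q = 1 := by omega
    exact ⟨0, rfl⟩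
  · obtain ⟨rfl, rfl⟩ : p = 0 ∧ q = 0 := by omega
    exact ⟨1, rfl⟩
  · obtain ⟨rfl, rfl⟩ : p = 0 ∧ q = 0 := by omega
    exact ⟨2, rfl⟩
  · obtain ⟨rfl, rfl⟩ | ⟨rfl, rfl⟩ : (p = 0 ∧ q = 1) ∨ (p = 2 * n - 1 ∧ q = 0) := by omega
    exacts [⟨3, rfl⟩, ⟨5, rfl⟩]
  · obtain ⟨rfl, rfl⟩ | ⟨rfl, rfl⟩ : (p = 1 ∧ q = 0) ∨ (p = 0 ∧ q = 2 * n - 1) := by omega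
    exacts [⟨4, rfl⟩, ⟨6, rfl⟩]

theorem sum_nsmul_atom (c : Fin 7 → ℕ) : ∑ i, c i • atom n i =
    seq n (c 0 + c 4 + c 5 * (2 * n - 1)) (c 0 + c 3 + c 6 * (2 * n - 1))
      (2 * c 1 + c 3 + c 4 + c 5 + c 6) (c 2 + c 3 + c 5) (c 2 + c 4 + c 6) := by
  simp only [Fin.sum_univ_seven, atom, Matrix.cons_val, nsmul_seq, seq_add]
  congr 1 <;> ring

theorem exists_counts_iff (hn : 1 ≤ n) {k : ℕ} : (∃ c : Fin 7 → ℕ, ∑ i, c i = k ∧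
    c 0 + c 4 + c 5 * (2 * n - 1) = 2 * n - 1 ∧ c 0 + c 3 + c 6 * (2 * n - 1) = 2 * n - 1 ∧
    2 * c 1 + c 3 + c 4 + c 5 + c 6 = 2 ∧ c 2 + c 3 + c 5 = 1 ∧ c 2 + c 4 + c 6 = 1) ↔
    k = 2 ∨ k = 2 * n ∨ k = 2 * n + 1 := by
  constructor
  · rintro ⟨c, rfl, h⟩
    simp only [Fin.sum_univ_seven]
    obtain h₅ | h₅ : c 5 = 0 ∨ c 5 = 1 := by omega
    all_goals obtain h₆ | h₆ : c 6 = 0 ∨ c 6 = 1 := by omega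
    all_goals simp only [h₅, h₆, zero_mul, one_mul] at h ⊢; omega
  · rintro (rfl | rfl | rfl)
    · exact ⟨![0, 0, 0, 0, 0, 1, 1], by simp [Fin.sum_univ_seven]⟩
    · exact ⟨![2 * n - 2, 0, 0, 1, 1, 0, 0], by simp [Fin.sum_univ_seven]; omega⟩
    · exact ⟨![2 * n - 1, 1, 1, 0, 0, 0, 0], by simp [Fin.sum_univ_seven]; omega⟩

end C2C2n

theorem statement12 (n : ℕ) (hn : 2 ≤ n)
    (e₁ e₂ : ZMod 2 × ZMod (2 * n)) (he₁ : e₁ = (1, 0)) (he₂ : e₂ = (0, 1))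
    (U : Multiset (ZMod 2 × ZMod (2 * n)))
    (hU : U = Multiset.replicate (2 * n - 1) e₂ + {e₁, e₁ + e₂}) :
    IsMinZeroSum U ∧
      LengthsSet (U + U.map (fun x => -x)) = {2, 2 * n, 2 * n + 1} := by
  have hY : U = C2C2n.atom n 5 := by
    subst he₁ he₂ hU
    simp [C2C2n.atom, C2C2n.seq, ← Multiset.singleton_add, add_assoc]
  have hA : U + U.map (fun x => -x) = C2C2n.seq n (2 * n - 1) (2 * n - 1) 2 1 1 := by
    rw [hY, show C2C2n.atom n 5 = C2C2n.seq n (2 * n - 1) 0 1 1 0 from rfl, C2C2n.map_neg_seq,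
      C2C2n.seq_add]
    simp only [add_zero, zero_add, Nat.reduceAdd]
  refine ⟨hY ▸ C2C2n.isMinZeroSum_atom (by omega) 5, Set.ext fun k => ?_⟩
  rw [hA, mem_lengthsSet_iff_exists_nsmul (C2C2n.atom n) (C2C2n.isMinZeroSum_atom (by omega))
    fun S hS hmin => C2C2n.exists_eq_atom hn hS hmin]
  simp only [C2C2n.sum_nsmul_atom, C2C2n.seq_inj hn]
  exact C2C2n.exists_counts_iff (by omega)
end

section
/- Let G be a finite abelian group with |G| ≥ 3 and let U, V be minimal zero-sum sequences over G with V = -U, |U| = |V| = D(G) - 1, and L(UV) = {2, D(G)-1}. Suppose S = g^{-k}·(-g)^k·U is zero-sum free for some g in supp(U) with v_g(U) = k. If T and T' are distinct subsequences of U with σ(T) = σ(T'), then supp(T) ∩ supp(T') = ∅, T·T' = U, and 2σ(T) = 0. -/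
open Multiset

/-!
The sequences `A = T - T'` and `B = T' - T` are disjoint, `σ(A) = σ(B)` and `A·B ∣ U`. If
`A·B ≠ U`, then `Q = A·(-B)` and `R = (U A⁻¹)·(-(U B⁻¹))` are nonempty zero-sum sequences with
`Q·R = U·(-U)`. A factorization of `Q·R` into two atoms makes `R` an atom, which is impossible
since `R` contains the proper zero-sum subsequence `B·(-A)`. A factorization into
`|U| = D(G) - 1` atoms is impossible as well: atoms of `R` have length at least `2`, while `Q`
contains no zero-sum pair (it would be a short zero-sum subsequence of `U` or a common element of
`A` and `B`), so atoms of `Q` have length at least `3` and `3m + 2n ≤ |Q| + |R| = 2|U| = 2(m + n)`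
fails. Hence `A·B = U`, which forces `T ∩ T' = 0`.
-/

namespace Multiset

variable {α : Type*} [DecidableEq α] {s t u : Multiset α}

theorem disjoint_sub_sub (s t : Multiset α) : Disjoint (s - t) (t - s) :=
  disjoint_left.2 fun ha hb => by
    rw [← count_pos, count_sub] at ha hb
    omega

theorem sub_ne_sub_of_ne (h : s ≠ t) : s - t ≠ t - s := fun heq => by
  have hzero : s - t = 0 := disjoint_self.1 (heq ▸ disjoint_sub_sub s t)
  exact h (le_antisymm (tsub_eq_zero_iff_le.1 hzero) (tsub_eq_zero_iff_le.1 (heq ▸ hzero)))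

theorem sub_add_sub_le (hs : s ≤ u) (ht : t ≤ u) : s - t + (t - s) ≤ u :=
  le_iff_count.2 fun a => by
    have := le_iff_count.1 hs a
    have := le_iff_count.1 ht a
    rw [count_add, count_sub, count_sub]
    omega

theorem disjoint_and_add_eq_of_sub_add_sub_eq (hs : s ≤ u) (ht : t ≤ u)
    (h : s - t + (t - s) = u) : Disjoint s t ∧ s + t = u := by
  have hcount : ∀ a, count a s + count a t = count a u ∧ min (count a s) (count a t) = 0 :=
    fun a => by
      have := le_iff_count.1 hs a
      have := le_iff_count.1 ht a
      have := congrArg (count a) h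
      rw [count_add, count_sub, count_sub] at this
      omega
  refine ⟨disjoint_left.2 fun {a} ha hb => ?_, ext.2 fun a => by rw [count_add, (hcount a).1]⟩
  rw [← count_pos] at ha hb
  have := (hcount a).2
  omega

theorem sum_sub_eq_sum_sub {G : Type*} [AddCommGroup G] [DecidableEq G] {s t : Multiset G}
    (h : s.sum = t.sum) : (s - t).sum = (t - s).sum := by
  have hs := congrArg sum (sub_add_inter s t)
  have ht := congrArg sum (sub_add_inter t s)
  rw [sum_add] at hs ht
  rw [inter_comm] at ht
  rw [← add_right_cancel_iff, hs, ht, h]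

end Multiset

section ZeroSum

variable {G : Type*} [AddCommGroup G]

namespace IsMinZeroSum

variable {U T : Multiset G}

theorem eq_of_le_s15 (hU : IsMinZeroSum U) (hT : T ≤ U) (hT0 : T ≠ 0) (hsum : T.sum = 0) :
    T = U :=
  by_contra fun hne => hU.2.2 T hT hT0 hne hsum

theorem zero_notMem (hU : IsMinZeroSum U) (hcard : 1 < card U) : (0 : G) ∉ U := by
  intro h0
  have h := hU.eq_of_le_s15 (singleton_le.2 h0) (singleton_ne_zero 0) (sum_singleton 0)
  simp [← h] at hcard

theorem zero_notMem_add_map_neg (hU : IsMinZeroSum U) (hcard : 1 < card U) :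
    (0 : G) ∉ U + U.map (fun x => -x) := by
  have h0 := hU.zero_notMem hcard
  simp only [mem_add, mem_map, neg_eq_zero, exists_eq_right, or_self]
  exact h0

end IsMinZeroSum

theorem two_le_card_of_zero_notMem {S : Multiset G} (h0 : (0 : G) ∉ S) (hS0 : S ≠ 0)
    (hsum : S.sum = 0) : 2 ≤ card S := by
  by_contra! hlt
  have hpos : 0 < card S := card_pos.2 hS0
  obtain ⟨a, rfl⟩ := card_eq_one.1 (show card S = 1 by omega)
  simp_all

theorem exists_isMinZeroSum_le_s15 {M : Multiset G} (hM : M ≠ 0) (hsum : M.sum = 0) :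
    ∃ N ≤ M, IsMinZeroSum N := by
  obtain ⟨N, ⟨hNM, hN0, hNsum⟩, hmin⟩ :=
    wellFounded_lt.has_min {N : Multiset G | N ≤ M ∧ N ≠ 0 ∧ N.sum = 0} ⟨M, le_rfl, hM, hsum⟩
  exact ⟨N, hNM, hN0, hNsum, fun T hTN hT0 hTne hTsum =>
    hmin T ⟨hTN.trans hNM, hT0, hTsum⟩ (lt_of_le_of_ne hTN hTne)⟩

theorem exists_isFactorization (M : Multiset G) (hsum : M.sum = 0) :
    ∃ z, IsFactorization M z := by
  induction M using Multiset.strongInductionOn with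
  | ih M ih =>
    by_cases hM : M = 0
    · exact ⟨0, by simp, by simp [hM]⟩
    obtain ⟨N, hNM, hN⟩ := exists_isMinZeroSum_le_s15 hM hsum
    obtain ⟨M', rfl⟩ := Multiset.le_iff_exists_add.1 hNM
    have hM'sum : M'.sum = 0 := by simpa [hN.2.1] using hsum
    obtain ⟨z, hz, hzsum⟩ := ih M' (lt_add_of_pos_left M' (pos_iff_ne_zero.2 hN.1)) hM'sum
    refine ⟨N ::ₘ z, ?_, by rw [sum_cons, hzsum]⟩
    rintro S hS
    rcases mem_cons.1 hS with rfl | hS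
    exacts [hN, hz S hS]

theorem mem_lengthsSet_iff {M : Multiset G} {n : ℕ} :
    n ∈ LengthsSet M ↔ ∃ z, IsFactorization M z ∧ card z = n := by
  simp only [LengthsSet, IsFactorization, Set.mem_ofPred_eq]
  tauto

theorem exists_mem_lengthsSet {M : Multiset G} (hsum : M.sum = 0) : ∃ n, n ∈ LengthsSet M :=
  let ⟨z, hz⟩ := exists_isFactorization M hsum
  ⟨_, mem_lengthsSet_iff.2 ⟨z, hz, rfl⟩⟩

theorem add_mem_lengthsSet {M N : Multiset G} {m n : ℕ} (hm : m ∈ LengthsSet M)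
    (hn : n ∈ LengthsSet N) : m + n ∈ LengthsSet (M + N) := by
  obtain ⟨y, hy, rfl⟩ := mem_lengthsSet_iff.1 hm
  obtain ⟨z, hz, rfl⟩ := mem_lengthsSet_iff.1 hn
  refine mem_lengthsSet_iff.2 ⟨y + z, ⟨?_, by rw [sum_add, hy.2, hz.2]⟩, card_add y z⟩
  rintro S hS
  rcases mem_add.1 hS with hS | hS
  exacts [hy.1 S hS, hz.1 S hS]

theorem pos_of_mem_lengthsSet {M : Multiset G} {n : ℕ} (hM : M ≠ 0) (hn : n ∈ LengthsSet M) :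
    0 < n := by
  obtain ⟨z, hz, rfl⟩ := mem_lengthsSet_iff.1 hn
  refine card_pos.2 fun h => hM ?_
  rw [← hz.2, h, sum_zero]

theorem isMinZeroSum_of_one_mem_lengthsSet {M : Multiset G} (h : 1 ∈ LengthsSet M) :
    IsMinZeroSum M := by
  obtain ⟨z, hz, hcard⟩ := mem_lengthsSet_iff.1 h
  obtain ⟨S, rfl⟩ := card_eq_one.1 hcard
  rw [← hz.2, sum_singleton]
  exact hz.1 S (mem_singleton_self S)

theorem mul_le_card_of_mem_lengthsSet {M : Multiset G} {m n : ℕ}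
    (hm : ∀ S ≤ M, S ≠ 0 → S.sum = 0 → m ≤ card S) (hn : n ∈ LengthsSet M) :
    m * n ≤ card M := by
  obtain ⟨z, hz, rfl⟩ := mem_lengthsSet_iff.1 hn
  have hle : ∀ k ∈ z.map card, m ≤ k := by
    simp only [mem_map, forall_exists_index, and_imp]
    rintro _ S hS rfl
    exact hm S (hz.2 ▸ le_sum_of_mem hS) (hz.1 S hS).1 (hz.1 S hS).2.1
  calc m * card z = card (z.map card) • m := by rw [card_map, smul_eq_mul, mul_comm]
    _ ≤ (z.map card).sum := card_nsmul_le_sum hle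
    _ = card M := by rw [← hz.2, ← card_join, join]

theorem IsMinZeroSum.two_mul_le_card_of_mem_lengthsSet {U M : Multiset G} (hU : IsMinZeroSum U)
    (hcard : 1 < card U) (hM : M ≤ U + U.map (fun x => -x)) {n : ℕ} (hn : n ∈ LengthsSet M) :
    2 * n ≤ card M :=
  mul_le_card_of_mem_lengthsSet (fun _ hS hS0 hSsum => two_le_card_of_zero_notMem
    (fun h => hU.zero_notMem_add_map_neg hcard (mem_of_le (hS.trans hM) h)) hS0 hSsum) hn

variable [DecidableEq G] {U A B : Multiset G}

theorem not_isMinZeroSum_sub_add_map_neg_sub (hAB : A + B < U) (hB : B ≠ 0)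
    (hsum : A.sum = B.sum) : ¬ IsMinZeroSum (U - A + (U - B).map (fun x => -x)) := by
  intro hR
  have hle : B + A.map (fun x => -x) ≤ U - A + (U - B).map (fun x => -x) :=
    add_le_add (le_tsub_of_add_le_left hAB.le) (map_le_map (le_tsub_of_add_le_right hAB.le))
  have hlt : card (B + A.map (fun x => -x)) < card (U - A + (U - B).map (fun x => -x)) := by
    have hA : A ≤ U := (le_add_right A B).trans hAB.le
    have hB : B ≤ U := (le_add_left B A).trans hAB.le
    have hcard := card_lt_card hAB
    have := card_le_card hA
    have := card_le_card hB
    rw [card_add] at hcard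
    rw [card_add, card_add, card_map, card_map, card_sub hA, card_sub hB]
    omega
  have hsum' : (B + A.map (fun x => -x)).sum = 0 := by
    rw [sum_add, sum_map_neg', hsum, add_neg_cancel]
  exact hlt.ne (congrArg card (hR.eq_of_le_s15 hle (by simp [hB]) hsum'))

theorem IsMinZeroSum.card_ne_two_of_le_add_map_neg (hU : IsMinZeroSum U) (hU3 : 2 < card U)
    (hA : A ≤ U) (hB : B ≤ U) (hAB : Disjoint A B) {S : Multiset G}
    (hS : S ≤ A + B.map (fun x => -x)) (hsum : S.sum = 0) : card S ≠ 2 := by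
  intro hcard
  have hsmall : ∀ T ≤ U, card T = 2 → T.sum ≠ 0 := fun T hT hT2 hT0 => by
    have := congrArg card (hU.eq_of_le_s15 hT (by rintro rfl; simp at hT2) hT0)
    omega
  have hdecomp : S - A + S ∩ A = S := sub_add_inter S A
  have hSB : S - A ≤ B.map (fun x => -x) := tsub_le_iff_left.2 hS
  have hSA : S ∩ A ≤ A := inter_le_right
  have hc : card (S - A) + card (S ∩ A) = 2 := by rw [← card_add, hdecomp, hcard]
  obtain h | h | h : card (S ∩ A) = 0 ∨ card (S ∩ A) = 1 ∨ card (S ∩ A) = 2 := by omega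
  · rw [card_eq_zero.1 h, add_zero] at hdecomp
    have hle : S.map (fun x => -x) ≤ B := by
      have := map_le_map (f := fun x : G => -x) (hdecomp ▸ hSB : S ≤ B.map (fun x => -x))
      simpa [map_map, Function.comp_def] using this
    exact hsmall _ (hle.trans hB) (by rw [card_map, hcard]) (by rw [sum_map_neg', hsum, neg_zero])
  · obtain ⟨a, ha⟩ := card_eq_one.1 h
    obtain ⟨b, hb⟩ := card_eq_one.1 (show card (S - A) = 1 by omega)
    have haA : a ∈ A := mem_of_le hSA (ha ▸ mem_singleton_self a)
    obtain ⟨c, hcB, rfl⟩ := mem_map.1 (mem_of_le hSB (hb ▸ mem_singleton_self b))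
    have hca : c = a := by
      rw [← hdecomp, hb, ha, sum_add, sum_singleton, sum_singleton] at hsum
      exact neg_add_eq_zero.1 hsum
    exact disjoint_left.1 hAB haA (hca ▸ hcB)
  · rw [card_eq_zero.1 (show card (S - A) = 0 by omega), zero_add] at hdecomp
    exact hsmall S (hdecomp ▸ hSA.trans hA) hcard hsum

theorem IsMinZeroSum.three_mul_le_card_of_mem_lengthsSet (hU : IsMinZeroSum U) (hU3 : 2 < card U)
    (hA : A ≤ U) (hB : B ≤ U) (hAB : Disjoint A B) {m : ℕ}
    (hm : m ∈ LengthsSet (A + B.map (fun x => -x))) : 3 * m ≤ card (A + B.map (fun x => -x)) :=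
  mul_le_card_of_mem_lengthsSet (fun S hS hS0 hSsum => by
    have h0 : (0 : G) ∉ S := fun h => hU.zero_notMem_add_map_neg (by omega)
      (mem_of_le (hS.trans (add_le_add hA (map_le_map hB))) h)
    have := two_le_card_of_zero_notMem h0 hS0 hSsum
    have := hU.card_ne_two_of_le_add_map_neg hU3 hA hB hAB hS hSsum
    omega) hm

theorem IsMinZeroSum.not_lengthsSet_subset_of_lt (hU : IsMinZeroSum U) (hAB : A + B < U)
    (hA0 : A ≠ 0) (hB0 : B ≠ 0) (hdisj : Disjoint A B) (hsum : A.sum = B.sum) :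
    ¬ LengthsSet (U + U.map (fun x => -x)) ⊆ {2, card U} := by
  intro hL
  have hA : A ≤ U := (le_add_right A B).trans hAB.le
  have hB : B ≤ U := (le_add_left B A).trans hAB.le
  set Q := A + B.map (fun x => -x) with hQ
  set R := U - A + (U - B).map (fun x => -x)
  have hQR : Q + R = U + U.map (fun x => -x) := by
    rw [add_add_add_comm, ← Multiset.map_add, add_tsub_cancel_of_le hA, add_tsub_cancel_of_le hB]
  have hQsum : Q.sum = 0 := by rw [sum_add, sum_map_neg', hsum, add_neg_cancel]
  have hRsum : R.sum = 0 := by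
    have := congrArg sum hQR
    rwa [sum_add Q R, hQsum, zero_add, sum_add U, sum_map_neg', hU.2.1, neg_zero, add_zero] at this
  have hcardQR : card Q + card R = 2 * card U := by
    rw [← card_add, hQR, card_add, card_map, two_mul]
  have hcardQ : card Q = card A + card B := by rw [hQ, card_add, card_map]
  have hcardAB : card A + card B < card U := by simpa using card_lt_card hAB
  have hApos := card_pos.2 hA0
  have hBpos := card_pos.2 hB0
  have hU3 : 2 < card U := by omega
  obtain ⟨m, hm⟩ := exists_mem_lengthsSet hQsum
  obtain ⟨n, hn⟩ := exists_mem_lengthsSet hRsum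
  have hm0 := pos_of_mem_lengthsSet (M := Q) (card_pos.1 (by omega)) hm
  have hn0 := pos_of_mem_lengthsSet (M := R) (card_pos.1 (by omega)) hn
  have hmn := hL (hQR ▸ add_mem_lengthsSet hm hn)
  simp only [Set.mem_insert_iff, Set.mem_singleton_iff] at hmn
  rcases hmn with hmn | hmn
  · obtain rfl : n = 1 := by omega
    exact not_isMinZeroSum_sub_add_map_neg_sub hAB hB0 hsum (isMinZeroSum_of_one_mem_lengthsSet hn)
  · have hQm : 3 * m ≤ card Q := hU.three_mul_le_card_of_mem_lengthsSet hU3 hA hB hdisj hm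
    have hRn : 2 * n ≤ card R :=
      hU.two_mul_le_card_of_mem_lengthsSet (by omega) (hQR ▸ le_add_left R Q) hn
    omega

theorem IsMinZeroSum.add_eq_of_disjoint_of_sum_eq (hU : IsMinZeroSum U)
    (hL : LengthsSet (U + U.map (fun x => -x)) ⊆ {2, card U}) (hAB : A + B ≤ U)
    (hdisj : Disjoint A B) (hne : A ≠ B) (hsum : A.sum = B.sum) : A + B = U := by
  by_contra hAB'
  have hA0 : A ≠ 0 := by
    rintro rfl
    have hB : B ≤ U := by rwa [zero_add] at hAB
    exact hAB' (by rw [zero_add, hU.eq_of_le_s15 hB hne.symm (hsum.symm.trans sum_zero)])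
  have hB0 : B ≠ 0 := by
    rintro rfl
    have hA : A ≤ U := by rwa [add_zero] at hAB
    exact hAB' (by rw [add_zero, hU.eq_of_le_s15 hA hne (hsum.trans sum_zero)])
  exact hU.not_lengthsSet_subset_of_lt (lt_of_le_of_ne hAB hAB') hA0 hB0 hdisj hsum hL

end ZeroSum

theorem statement15_general {G : Type*} [AddCommGroup G] [DecidableEq G]
    (U V : Multiset G) (hU : IsMinZeroSum U)
    (hVU : V = U.map (fun x => -x))
    (hcU : Multiset.card U = DavenportConstant G - 1)
    (hL : LengthsSet (U + V) = {2, DavenportConstant G - 1})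
    (T T' : Multiset G) (hT : T ≤ U) (hT' : T' ≤ U) (hne : T ≠ T')
    (hsum : T.sum = T'.sum) :
    T.toFinset ∩ T'.toFinset = ∅ ∧ T + T' = U ∧ 2 • T.sum = 0 := by
  subst hVU
  have hsplit : T - T' + (T' - T) = U :=
    hU.add_eq_of_disjoint_of_sum_eq (by rw [hL, hcU]) (sub_add_sub_le hT hT')
      (disjoint_sub_sub T T') (sub_ne_sub_of_ne hne) (sum_sub_eq_sum_sub hsum)
  obtain ⟨hdisj, hTT'⟩ := disjoint_and_add_eq_of_sub_add_sub_eq hT hT' hsplit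
  refine ⟨Finset.disjoint_iff_inter_eq_empty.1 (disjoint_toFinset.2 hdisj), hTT', ?_⟩
  rw [two_nsmul]
  nth_rewrite 2 [hsum]
  rw [← sum_add, hTT', hU.2.1]

theorem statement15 {G : Type*} [AddCommGroup G] [Fintype G] [DecidableEq G]
    (hG : 3 ≤ Fintype.card G)
    (U V : Multiset G) (hU : IsMinZeroSum U) (hV : IsMinZeroSum V)
    (hVU : V = U.map (fun x => -x))
    (hcU : Multiset.card U = DavenportConstant G - 1)
    (hcV : Multiset.card V = DavenportConstant G - 1)
    (hL : LengthsSet (U + V) = {2, DavenportConstant G - 1})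
    (g : G) (hg : g ∈ U) (k : ℕ) (hk : U.count g = k)
    (hS : ∀ T ≤ (U - Multiset.replicate k g) + Multiset.replicate k (-g),
      T ≠ 0 → T.sum ≠ 0)
    (T T' : Multiset G) (hT : T ≤ U) (hT' : T' ≤ U) (hne : T ≠ T')
    (hsum : T.sum = T'.sum) :
    T.toFinset ∩ T'.toFinset = ∅ ∧ T + T' = U ∧ 2 • T.sum = 0 :=
  statement15_general U V hU hVU hcU hL T T' hT hT' hne hsum
end
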